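/- Let (V,X,d) be a continuity space. The topology generated by (V,X,d) is Fréchet (T1) if and only if for all x, y ∈ X, d(x,y) = ⊥ implies x = y. -/

import Mathlib

/-- `y` is well above `x` (written `y ≻ x`): for every `S` with `⨅ S ≤ x`
there is `s ∈ S` with `s ≤ y`. -/
def WellAbove {V : Type*} [CompleteLattice V] (y x : V) : Prop :=
  ∀ S : Set V, sInf S ≤ x → ∃ s ∈ S, s ≤ y

theorem WellAbove.mono {V : Type*} [CompleteLattice V] {a b x : V}
    (h : WellAbove a x) (hab : a ≤ b) : WellAbove b x := by
  intro S hS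
  obtain ⟨s, hs, hsa⟩ := h S hS
  exact ⟨s, hs, hsa.trans hab⟩

/-- A complete lattice `V` together with an addition `add` is a value quantale if it is
completely distributive (expressed via Raney's characterization `y = ⨅ {a | a ≻ y}`),
the set `{a | a ≻ ⊥}` is a filter (nonempty, upward closed, closed under binary meets),
and `add` is associative, commutative, has `⊥` as neutral element and distributes over
arbitrary infima. -/
structure IsValueQuantale (V : Type*) [CompleteLattice V] (add : V → V → V) : Prop where
  raney : ∀ y : V, y = sInf {a | WellAbove a y}
  wellAbove_bot_nonempty : ∃ a : V, WellAbove a ⊥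
  wellAbove_bot_upward : ∀ a b : V, WellAbove a ⊥ → a ≤ b → WellAbove b ⊥
  wellAbove_bot_inf : ∀ a b : V, WellAbove a ⊥ → WellAbove b ⊥ → WellAbove (a ⊓ b) ⊥
  add_assoc : ∀ a b c : V, add (add a b) c = add a (add b c)
  add_comm : ∀ a b : V, add a b = add b a
  add_bot : ∀ a : V, add a ⊥ = a
  add_sInf : ∀ (a : V) (S : Set V), add a (sInf S) = ⨅ s ∈ S, add a s

/-- A value quantale, bundled as a class. -/
class ValueQuantale (V : Type*) extends CompleteLattice V, Add V where
  isVQ : IsValueQuantale V (· + ·)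

/-- `d : X → X → V` is a `V`-space distance (w.r.t. the addition `add`). -/
structure IsVSpaceOn {V : Type*} [CompleteLattice V] (add : V → V → V)
    {X : Type*} (d : X → X → V) : Prop where
  refl : ∀ x, d x x = ⊥
  triangle : ∀ x y z, d x z ≤ add (d x y) (d y z)

/-- The open ball of radius `ε` about `x`: all `y` with `d x y ≺ ε`. -/
def ball {V X : Type*} [CompleteLattice V] (d : X → X → V) (ε : V) (x : X) : Set X :=
  {y | WellAbove ε (d x y)}

/-- `U` is open for the topology generated by a continuity space. -/
def GenOpen {V X : Type*} [CompleteLattice V] (d : X → X → V) (U : Set X) : Prop :=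
  ∀ x ∈ U, ∃ ε : V, WellAbove ε ⊥ ∧ ball d ε x ⊆ U

/-- The topology generated by a continuity space `(V, X, d)`. -/
def genTop {V X : Type*} [ValueQuantale V] (d : X → X → V) : TopologicalSpace X where
  IsOpen := GenOpen d
  isOpen_univ := fun _x _ => by
    obtain ⟨ε, hε⟩ := (ValueQuantale.isVQ (V := V)).wellAbove_bot_nonempty
    exact ⟨ε, hε, Set.subset_univ _⟩
  isOpen_inter := fun U₁ U₂ h₁ h₂ x hx => by
    obtain ⟨ε₁, hε₁, hb₁⟩ := h₁ x hx.1
    obtain ⟨ε₂, hε₂, hb₂⟩ := h₂ x hx.2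
    exact ⟨ε₁ ⊓ ε₂, (ValueQuantale.isVQ (V := V)).wellAbove_bot_inf _ _ hε₁ hε₂,
      fun y hy => ⟨hb₁ (WellAbove.mono hy inf_le_left), hb₂ (WellAbove.mono hy inf_le_right)⟩⟩
  isOpen_sUnion := fun S hS x hx => by
    obtain ⟨U, hU, hxU⟩ := hx
    obtain ⟨ε, hε, hb⟩ := hS U hU x hxU
    exact ⟨ε, hε, hb.trans (Set.subset_sUnion_of_mem hU)⟩

/-- `Ω S`: the downward-closed families of finite subsets of `S`,
ordered by reverse inclusion. -/
abbrev Omega (S : Type*) := (LowerSet (Finset S))ᵒᵈ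

/-- The underlying family of finite subsets of an element of `Ω S`. -/
def Omega.carrier {S : Type*} (A : Omega S) : Set (Finset S) :=
  ((OrderDual.ofDual A : LowerSet (Finset S)) : Set (Finset S))

/-- Construct an element of `Ω S` from a downward-closed family of finite subsets. -/
def Omega.mk {S : Type*} (A : Set (Finset S)) (h : IsLowerSet A) : Omega S :=
  OrderDual.toDual ⟨A, h⟩

/-- Addition on `Ω S`: intersection of the families. -/
def omegaAdd {S : Type*} (A B : Omega S) : Omega S :=
  Omega.mk (Omega.carrier A ∩ Omega.carrier B)
    ((OrderDual.ofDual A : LowerSet (Finset S)).lower.inter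
      (OrderDual.ofDual B : LowerSet (Finset S)).lower)

/-! The complement of `{y}` is open iff every `x ≠ y` has a radius `ε ≻ ⊥` with `y ∉ B_ε(x)`,
i.e. `ε ⊁ d(x,y)`. Since `⊥ = ⨅ {ε | ε ≻ ⊥}` (Raney), and `ε ≻ a` forces `a ≤ ε`, such a radius
exists exactly when `d(x,y) ≠ ⊥`. -/

theorem WellAbove.le {V : Type*} [CompleteLattice V] {y x : V} (h : WellAbove y x) : x ≤ y := by
  obtain ⟨s, rfl, hs⟩ := h {x} (by simp)
  exact hs

theorem le_of_forall_wellAbove_imp_wellAbove {V : Type*} [CompleteLattice V] {a y : V}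
    (hy : y = sInf {ε | WellAbove ε y}) (h : ∀ ε, WellAbove ε y → WellAbove ε a) : a ≤ y :=
  hy ▸ le_sInf fun ε hε => (h ε hε).le

theorem exists_wellAbove_bot_not_wellAbove_iff {V : Type*} [ValueQuantale V] {a : V} :
    (∃ ε : V, WellAbove ε ⊥ ∧ ¬ WellAbove ε a) ↔ a ≠ ⊥ := by
  constructor
  · rintro ⟨ε, hε, hεa⟩ rfl
    exact hεa hε
  · intro ha
    by_contra! h
    exact ha (le_bot_iff.mp
      (le_of_forall_wellAbove_imp_wellAbove (ValueQuantale.isVQ.raney ⊥) h))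

theorem genOpen_compl_singleton_iff {V X : Type*} [CompleteLattice V] {d : X → X → V} {y : X} :
    GenOpen d {y}ᶜ ↔ ∀ x, x ≠ y → ∃ ε : V, WellAbove ε ⊥ ∧ ¬ WellAbove ε (d x y) := by
  simp only [GenOpen, Set.mem_compl_singleton_iff, Set.subset_compl_singleton_iff, ball,
    Set.mem_ofPred_eq]

theorem t1_iff_general {V X : Type*} [ValueQuantale V] (d : X → X → V) :
    @T1Space X (genTop d) ↔ ∀ x y : X, d x y = ⊥ → x = y := by
  let : TopologicalSpace X := genTop d
  have t1_iff_genOpen : T1Space X ↔ ∀ y, GenOpen d {y}ᶜ :=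
    ⟨fun h y => (h.t1 y).isOpen_compl, fun h => ⟨fun y => isOpen_compl_iff.mp (h y)⟩⟩
  simp only [t1_iff_genOpen, genOpen_compl_singleton_iff, exists_wellAbove_bot_not_wellAbove_iff]
  rw [forall_comm]
  exact forall_congr' fun x => forall_congr' fun y => not_imp_not

/-- the topology generated by a continuity space `(V,X,d)` is T1 iff
`d(x,y) = ⊥` implies `x = y`. -/
theorem t1_iff {V X : Type*} [ValueQuantale V] (d : X → X → V)
    (hd : IsVSpaceOn (· + · : V → V → V) d) :
    @T1Space X (genTop d) ↔ ∀ x y : X, d x y = ⊥ → x = y :=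
  t1_iff_general d
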